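/- arXiv:1410.5885 — 6 statements merged into one kernel-verified Lean document; each statement's English description precedes it below -/
import Mathlib

section
/- For any real random variables Y₀, Y₁ on a common probability space with distribution functions F₀, F₁, and any δ ∈ ℝ, P(Y₁ − Y₀ ≤ δ) ≥ sup over y ∈ ℝ of max(F₁(y) − F₀(y − δ), 0). -/
open MeasureTheory Set

theorem makarov_lower_bound
    (Ω : Type*) [MeasurableSpace Ω] (μ : Measure Ω) [IsProbabilityMeasure μ]
    (Y₀ Y₁ : Ω → ℝ) (hY₀ : Measurable Y₀) (hY₁ : Measurable Y₁) (δ : ℝ) :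
    ⨆ y : ℝ, max ((μ {ω | Y₁ ω ≤ y}).toReal - (μ {ω | Y₀ ω ≤ y - δ}).toReal) 0
      ≤ (μ {ω | Y₁ ω - Y₀ ω ≤ δ}).toReal := by
  apply ciSup_le
  intro y
  apply max_le _ ENNReal.toReal_nonneg
  have hsub : {ω | Y₁ ω ≤ y} \ {ω | Y₀ ω ≤ y - δ} ⊆ {ω | Y₁ ω - Y₀ ω ≤ δ} := by
    rintro ω ⟨h1, h2⟩
    simp only [mem_setOf_eq, not_le] at *
    linarith
  have h1 : μ {ω | Y₁ ω ≤ y} ≤ μ {ω | Y₀ ω ≤ y - δ} + μ {ω | Y₁ ω - Y₀ ω ≤ δ} :=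
    calc μ {ω | Y₁ ω ≤ y}
        ≤ μ ({ω | Y₀ ω ≤ y - δ} ∪ ({ω | Y₁ ω ≤ y} \ {ω | Y₀ ω ≤ y - δ})) := by
          apply measure_mono
          intro ω hω
          by_cases h : ω ∈ {ω | Y₀ ω ≤ y - δ}
          · exact Or.inl h
          · exact Or.inr ⟨hω, h⟩
      _ ≤ μ {ω | Y₀ ω ≤ y - δ} + μ ({ω | Y₁ ω ≤ y} \ {ω | Y₀ ω ≤ y - δ}) := measure_union_le _ _
      _ ≤ μ {ω | Y₀ ω ≤ y - δ} + μ {ω | Y₁ ω - Y₀ ω ≤ δ} := by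
          exact add_le_add (le_refl _) (measure_mono (μ := μ) hsub)
  have hfin : ∀ s : Set Ω, μ s ≠ ⊤ := fun s => measure_ne_top μ s
  have h2 := ENNReal.toReal_mono (by
    exact ENNReal.add_ne_top.mpr ⟨hfin _, hfin _⟩) h1
  rw [ENNReal.toReal_add (hfin _) (hfin _)] at h2
  linarith
end

section
/- For any real random variables Y₀, Y₁ on a common probability space with distribution functions F₀, F₁, and any δ ∈ ℝ, P(Y₁ − Y₀ < δ) ≤ 1 + inf over y ∈ ℝ of min(F₁(y) − F₀(y − δ), 0). -/
open MeasureTheory Set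

theorem makarov_upper_bound
    (Ω : Type*) [MeasurableSpace Ω] (μ : Measure Ω) [IsProbabilityMeasure μ]
    (Y₀ Y₁ : Ω → ℝ) (hY₀ : Measurable Y₀) (hY₁ : Measurable Y₁) (δ : ℝ) :
    (μ {ω | Y₁ ω - Y₀ ω < δ}).toReal
      ≤ 1 + ⨅ y : ℝ, min ((μ {ω | Y₁ ω ≤ y}).toReal - (μ {ω | Y₀ ω ≤ y - δ}).toReal) 0 := by
  rw [← sub_le_iff_le_add']
  apply le_ciInf
  intro y
  rw [le_min_iff]
  have hB : MeasurableSet {ω | Y₀ ω ≤ y - δ} := measurableSet_le hY₀ measurable_const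
  have hBle : μ {ω | Y₀ ω ≤ y - δ} ≤ 1 := prob_le_one
  have hStop : μ {ω | Y₁ ω - Y₀ ω < δ} ≤ 1 := prob_le_one
  constructor
  · have hsub : {ω | Y₁ ω - Y₀ ω < δ} ⊆ {ω | Y₁ ω ≤ y} ∪ {ω | Y₀ ω ≤ y - δ}ᶜ := by
      intro ω hω
      simp only [mem_union, mem_setOf_eq, mem_compl_iff, not_le] at *
      by_contra h
      push_neg at h
      linarith [h.1, h.2]
    have h1 : μ {ω | Y₁ ω - Y₀ ω < δ} ≤ μ {ω | Y₁ ω ≤ y} + μ ({ω | Y₀ ω ≤ y - δ}ᶜ) :=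
      (measure_mono hsub).trans (measure_union_le _ _)
    have hc : μ ({ω | Y₀ ω ≤ y - δ}ᶜ) = 1 - μ {ω | Y₀ ω ≤ y - δ} :=
      prob_compl_eq_one_sub hB
    rw [hc] at h1
    have h2 := ENNReal.toReal_mono (by finiteness) h1
    rw [ENNReal.toReal_add (by finiteness) (by finiteness),
      ENNReal.toReal_sub_of_le hBle (by finiteness)] at h2
    simp only [ENNReal.toReal_one] at h2
    linarith
  · have := ENNReal.toReal_mono (by finiteness) hStop
    simp only [ENNReal.toReal_one] at this
    linarith
end

section
/- Let Y₀, Y₁ be real random variables on a common probability space with P(Y₁ ≥ Y₀) = 1, and let δ > 0. Then for any finite strictly ordered sequence a₁ < a₂ < ⋯ < a_n with a_{k+1} − a_k ≤ δ for all k, P(Y₁ − Y₀ ≤ δ) ≥ Σ_{k=1}^{n−1} max(F₁(a_{k+1}) − F₀(a_k), 0). -/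
open MeasureTheory Set

theorem improved_lower_bound_mtr
    (Ω : Type*) [MeasurableSpace Ω] (μ : Measure Ω) [IsProbabilityMeasure μ]
    (Y₀ Y₁ : Ω → ℝ) (hY₀ : Measurable Y₀) (hY₁ : Measurable Y₁)
    (hMTR : μ {ω | Y₀ ω ≤ Y₁ ω} = 1) (δ : ℝ) (hδ : 0 < δ)
    (n : ℕ) (a : ℕ → ℝ)
    (hmono : ∀ k, k + 1 < n → a k < a (k + 1))
    (hgap : ∀ k, k + 1 < n → a (k + 1) - a k ≤ δ) :
    ∑ k ∈ Finset.range (n - 1),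
        max ((μ {ω | Y₁ ω ≤ a (k + 1)}).toReal - (μ {ω | Y₀ ω ≤ a k}).toReal) 0
      ≤ (μ {ω | Y₁ ω - Y₀ ω ≤ δ}).toReal := by
  classical
  set M : Set Ω := {ω | Y₀ ω ≤ Y₁ ω} with hMdef
  have hMmeas : MeasurableSet M := measurableSet_le hY₀ hY₁
  have hMc : μ Mᶜ = 0 := by
    rw [measure_compl hMmeas (measure_ne_top _ _), hMTR, measure_univ, tsub_self]
  set S : ℕ → Set Ω :=
    fun k => {ω | a k < Y₀ ω ∧ Y₁ ω ≤ a (k + 1) ∧ Y₀ ω ≤ Y₁ ω} with hSdef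
  have hSmeas : ∀ k, MeasurableSet (S k) := by
    intro k
    exact (measurableSet_lt measurable_const hY₀).inter
      ((measurableSet_le hY₁ measurable_const).inter (measurableSet_le hY₀ hY₁))
  -- monotonicity of a
  have amono : ∀ i j, i ≤ j → j < n → a i ≤ a j := by
    intro i j hij
    induction hij with
    | refl => intro _; exact le_rfl
    | @step m h ih =>
        intro hmn
        exact le_trans (ih (Nat.lt_of_succ_lt hmn)) (le_of_lt (hmono m hmn))
  -- each term is at most μ (S k)
  have hterm : ∀ k ∈ Finset.range (n - 1),
      max ((μ {ω | Y₁ ω ≤ a (k + 1)}).toReal - (μ {ω | Y₀ ω ≤ a k}).toReal) 0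
        ≤ (μ (S k)).toReal := by
    intro k hk
    refine max_le ?_ ENNReal.toReal_nonneg
    have hsub : {ω | Y₁ ω ≤ a (k + 1)} ∩ M ⊆ {ω | Y₀ ω ≤ a k} ∪ S k := by
      intro ω hω
      rcases hω with ⟨h1, h2⟩
      by_cases h : Y₀ ω ≤ a k
      · exact Or.inl h
      · exact Or.inr ⟨lt_of_not_ge h, h1, h2⟩
    have h1 : μ {ω | Y₁ ω ≤ a (k + 1)} ≤ μ {ω | Y₀ ω ≤ a k} + μ (S k) := by
      calc μ {ω | Y₁ ω ≤ a (k + 1)}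
          ≤ μ (({ω | Y₁ ω ≤ a (k + 1)} ∩ M) ∪ Mᶜ) := by
            apply measure_mono
            intro ω hω
            by_cases hm : ω ∈ M
            · exact Or.inl ⟨hω, hm⟩
            · exact Or.inr hm
        _ ≤ μ ({ω | Y₁ ω ≤ a (k + 1)} ∩ M) + μ Mᶜ := measure_union_le _ _
        _ = μ ({ω | Y₁ ω ≤ a (k + 1)} ∩ M) := by rw [hMc, add_zero]
        _ ≤ μ ({ω | Y₀ ω ≤ a k} ∪ S k) := measure_mono hsub
        _ ≤ μ {ω | Y₀ ω ≤ a k} + μ (S k) := measure_union_le _ _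
    have h2 : (μ {ω | Y₁ ω ≤ a (k + 1)}).toReal
        ≤ (μ {ω | Y₀ ω ≤ a k}).toReal + (μ (S k)).toReal := by
      rw [← ENNReal.toReal_add (measure_ne_top _ _) (measure_ne_top _ _)]
      exact ENNReal.toReal_mono (ENNReal.add_ne_top.2 ⟨measure_ne_top _ _, measure_ne_top _ _⟩) h1
    linarith
  -- S k are pairwise disjoint
  have hdisj : (↑(Finset.range (n - 1)) : Set ℕ).PairwiseDisjoint S := by
    intro i hi j hj hij
    simp only [Finset.coe_range, Set.mem_Iio] at hi hj
    have key : ∀ p q : ℕ, p < q → q < n - 1 → Disjoint (S p) (S q) := by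
      intro p q hpq hq
      rw [Set.disjoint_left]
      rintro ω ⟨_, hp2, hp3⟩ ⟨hq1, _, _⟩
      have h1 : a (p + 1) ≤ a q := amono (p + 1) q hpq (lt_of_lt_of_le hq (Nat.sub_le n 1))
      have : a q < a q := lt_of_lt_of_le hq1 (le_trans hp3 (le_trans hp2 h1))
      exact lt_irrefl _ this
    rcases lt_or_gt_of_ne hij with h | h
    · exact key i j h hj
    · exact (key j i h hi).symm
  -- union of the S k is in the target event
  have hsubset : (⋃ k ∈ Finset.range (n - 1), S k) ⊆ {ω | Y₁ ω - Y₀ ω ≤ δ} := by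
    intro ω hω
    simp only [Set.mem_iUnion, Finset.mem_range] at hω
    obtain ⟨k, hk, h1, h2, _⟩ := hω
    have hkn : k + 1 < n := by omega
    have := hgap k hkn
    simp only [Set.mem_setOf_eq]
    linarith
  have hunion : μ (⋃ k ∈ Finset.range (n - 1), S k)
      = ∑ k ∈ Finset.range (n - 1), μ (S k) :=
    measure_biUnion_finset hdisj (fun k _ => hSmeas k)
  calc ∑ k ∈ Finset.range (n - 1),
        max ((μ {ω | Y₁ ω ≤ a (k + 1)}).toReal - (μ {ω | Y₀ ω ≤ a k}).toReal) 0
      ≤ ∑ k ∈ Finset.range (n - 1), (μ (S k)).toReal := Finset.sum_le_sum hterm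
    _ = (∑ k ∈ Finset.range (n - 1), μ (S k)).toReal := by
        rw [ENNReal.toReal_sum (fun k _ => measure_ne_top _ _)]
    _ = (μ (⋃ k ∈ Finset.range (n - 1), S k)).toReal := by rw [hunion]
    _ ≤ (μ {ω | Y₁ ω - Y₀ ω ≤ δ}).toReal :=
        ENNReal.toReal_mono (measure_ne_top _ _) (measure_mono hsubset)
end

section
/- Let F₀, F₁ : ℝ → [0,1] with F₁ ≤ F₀ pointwise (stochastic dominance), δ > 0, and suppose a sequence a₁ ≤ ⋯ ≤ a_n satisfies a_{l+2} − a_l ≤ δ for some index l. Define the shortened sequence ã obtained by deleting a_{l+1}. Then Σ_k max(F₁(a_{k+1}) − F₀(a_k), 0) ≤ Σ_k max(F₁(ã_{k+1}) − F₀(ã_k), 0). -/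
theorem merge_triangles_lemma_B1
    (F₀ F₁ : ℝ → ℝ) (hF₀ : Monotone F₀) (hF₁ : Monotone F₁)
    (hrange₀ : ∀ t, F₀ t ∈ Set.Icc (0:ℝ) 1) (hrange₁ : ∀ t, F₁ t ∈ Set.Icc (0:ℝ) 1)
    (hdom : ∀ t, F₁ t ≤ F₀ t)
    (δ : ℝ) (hδ : 0 < δ) (n l : ℕ) (hl : l + 2 < n)
    (a : ℕ → ℝ) (hmono : ∀ k, k + 1 < n → a k ≤ a (k + 1))
    (hgap : a (l + 2) - a l ≤ δ) :
    ∑ k ∈ Finset.range (n - 1), max (F₁ (a (k + 1)) - F₀ (a k)) 0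
      ≤ ∑ k ∈ Finset.range (n - 2),
          max (F₁ ((fun m => if m ≤ l then a m else a (m + 1)) (k + 1))
              - F₀ ((fun m => if m ≤ l then a m else a (m + 1)) k)) 0 := by
  set f : ℕ → ℝ := fun k => max (F₁ (a (k+1)) - F₀ (a k)) 0 with hf
  set g : ℕ → ℝ := fun k => max (F₁ ((fun m => if m ≤ l then a m else a (m + 1)) (k + 1))
              - F₀ ((fun m => if m ≤ l then a m else a (m + 1)) k)) 0 with hg
  have key : f l + f (l+1) ≤ max (F₁ (a (l+2)) - F₀ (a l)) 0 := by
    have h1 : F₁ (a (l+1)) ≤ F₀ (a (l+1)) := hdom _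
    have h2 : F₁ (a (l+1)) ≤ F₁ (a (l+2)) := hF₁ (hmono (l+1) (by omega))
    have h3 : F₀ (a l) ≤ F₀ (a (l+1)) := hF₀ (hmono l (by omega))
    have hm1 := le_max_left (F₁ (a (l+2)) - F₀ (a l)) (0:ℝ)
    have hm2 := le_max_right (F₁ (a (l+2)) - F₀ (a l)) (0:ℝ)
    simp only [hf, show l+1+1 = l+2 from rfl]
    rcases max_cases (F₁ (a (l+1)) - F₀ (a l)) (0:ℝ) with ⟨e1,c1⟩|⟨e1,c1⟩ <;>
      rcases max_cases (F₁ (a (l+2)) - F₀ (a (l+1))) (0:ℝ) with ⟨e2,c2⟩|⟨e2,c2⟩ <;>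
      rw [e1, e2] <;> linarith
  -- RHS decomposition
  have hgl : g l = max (F₁ (a (l+2)) - F₀ (a l)) 0 := by
    simp only [hg]
    rw [if_neg (by omega), if_pos (le_refl l)]
  have hsplitR : ∑ k ∈ Finset.range (n-2), g k
      = (∑ k ∈ Finset.range l, f k) + g l + ∑ k ∈ Finset.Ico (l+2) (n-1), f k := by
    rw [← Finset.sum_range_add_sum_Ico g (show l+1 ≤ n-2 by omega),
        Finset.sum_range_succ]
    congr 1
    · congr 1
      apply Finset.sum_congr rfl
      intro k hk
      simp only [Finset.mem_range] at hk
      simp only [hg, hf]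
      rw [if_pos (by omega), if_pos (by omega)]
    · have h1 : ∀ k ∈ Finset.Ico (l+1) (n-2), g k = f (k+1) := by
        intro k hk
        simp only [Finset.mem_Ico] at hk
        simp only [hg, hf]
        rw [if_neg (by omega), if_neg (by omega)]
      rw [Finset.sum_congr rfl h1, Finset.sum_Ico_eq_sum_range,
          Finset.sum_Ico_eq_sum_range]
      have : n - 2 - (l+1) = n - 1 - (l+2) := by omega
      rw [this]
      apply Finset.sum_congr rfl
      intro i _
      congr 1
      omega
  -- LHS decomposition
  have hsplitL : ∑ k ∈ Finset.range (n-1), f k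
      = (∑ k ∈ Finset.range l, f k) + (f l + f (l+1)) + ∑ k ∈ Finset.Ico (l+2) (n-1), f k := by
    rw [← Finset.sum_range_add_sum_Ico f (show l+2 ≤ n-1 by omega),
        Finset.sum_range_succ, Finset.sum_range_succ]
    ring
  rw [hsplitL, hsplitR, hgl]
  gcongr
end

section
/- Let F₀, F₁ be CDFs with F₁ ≤ F₀ pointwise, and let a ≤ b ≤ c be reals. Then max(F₁(b) − F₀(a), 0) + max(F₁(c) − F₀(b), 0) ≤ max(F₁(c) − F₀(a), 0). -/
theorem merge_two_triangles
    (F₀ F₁ : ℝ → ℝ) (hF₀ : Monotone F₀) (hF₁ : Monotone F₁)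
    (hdom : ∀ t, F₁ t ≤ F₀ t)
    (a b c : ℝ) (hab : a ≤ b) (hbc : b ≤ c) :
    max (F₁ b - F₀ a) 0 + max (F₁ c - F₀ b) 0 ≤ max (F₁ c - F₀ a) 0 := by
  have h1 := hdom b
  have h2 := hF₀ hab
  have h3 := hF₁ hbc
  rcases le_total (F₁ b - F₀ a) 0 with h | h <;>
    rcases le_total (F₁ c - F₀ b) 0 with h' | h' <;>
    simp only [max_def] <;> split_ifs <;> linarith
end

section
/- Let Y₀, Y₁ be real random variables with P(Y₁ ≥ Y₀) = 1 and P(Y₁ = Y₀) = 0, with CDFs F₀, F₁, and let δ ≥ 0. Then P(Y₁ − Y₀ ≤ δ) ≤ 1 + inf over y ∈ ℝ of min(F₁(y) − F₀(y − δ), 0), i.e. the Makarov upper bound is not improved by the monotone treatment response restriction. -/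
open MeasureTheory Set

theorem makarov_upper_bound_under_mtr
    (Ω : Type*) [MeasurableSpace Ω] (μ : Measure Ω) [IsProbabilityMeasure μ]
    (Y₀ Y₁ : Ω → ℝ) (hY₀ : Measurable Y₀) (hY₁ : Measurable Y₁)
    (hMTR : μ {ω | Y₀ ω ≤ Y₁ ω} = 1) (hstrict : μ {ω | Y₀ ω = Y₁ ω} = 0)
    (δ : ℝ) (hδ : 0 ≤ δ) :
    (μ {ω | Y₁ ω - Y₀ ω ≤ δ}).toReal
      ≤ 1 + ⨅ y : ℝ, min ((μ {ω | Y₁ ω ≤ y}).toReal - (μ {ω | Y₀ ω ≤ y - δ}).toReal) 0 := by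
  rw [← sub_le_iff_le_add']
  apply le_ciInf
  intro y
  have hP : (μ {ω | Y₁ ω - Y₀ ω ≤ δ}).toReal ≤ 1 := by
    have := prob_le_one (μ := μ) (s := {ω | Y₁ ω - Y₀ ω ≤ δ})
    simpa using ENNReal.toReal_mono ENNReal.one_ne_top this
  apply le_min
  · -- inclusion-exclusion argument
    have hB : MeasurableSet {ω | Y₀ ω ≤ y - δ} := measurableSet_le hY₀ measurable_const
    have hsub : {ω | Y₁ ω - Y₀ ω ≤ δ} ∩ {ω | Y₀ ω ≤ y - δ} ⊆ {ω | Y₁ ω ≤ y} := by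
      rintro ω ⟨h1, h2⟩
      simp only [mem_setOf_eq] at *
      linarith
    have key : μ {ω | Y₁ ω - Y₀ ω ≤ δ} + μ {ω | Y₀ ω ≤ y - δ}
        ≤ 1 + μ {ω | Y₁ ω ≤ y} := by
      rw [← measure_union_add_inter _ hB]
      exact add_le_add prob_le_one (measure_mono hsub)
    have hkey : (μ {ω | Y₁ ω - Y₀ ω ≤ δ}).toReal + (μ {ω | Y₀ ω ≤ y - δ}).toReal
        ≤ 1 + (μ {ω | Y₁ ω ≤ y}).toReal := by
      have h1 : (μ {ω | Y₁ ω - Y₀ ω ≤ δ} + μ {ω | Y₀ ω ≤ y - δ}).toReal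
          ≤ (1 + μ {ω | Y₁ ω ≤ y}).toReal :=
        ENNReal.toReal_mono (by finiteness) key
      rwa [ENNReal.toReal_add (measure_ne_top μ _) (measure_ne_top μ _),
        ENNReal.toReal_add ENNReal.one_ne_top (measure_ne_top μ _), ENNReal.toReal_one] at h1
    linarith
  · linarith
end
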